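/- arXiv:1607.00490 — 2 statements merged into one kernel-verified Lean document; each statement's English description precedes it below -/
import Mathlib

section
/- Let F be a network computation problem over F_q with K source messages in which every sink t ∈ T demands an F_q-linear function g_t(X) = X·g_t of the source messages (g_t ∈ F_q^K a column vector). Then F admits a scalar linear solution over F_q if and only if the network N is matroidal with respect to a matroid M that is representable over F_q and has at least one representation M ∈ F_q^{m×n}, with m ≥ K and n ≥ m, satisfying constraints (C1) and (C2). -/
/-!
Statement 0: A network computation problem with linear sink demands admits a scalar
linear solution over `F` if and only if the network is matroidal with respect to a
matroid representable over `F` with a representation satisfying (C1) and (C2).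
-/

attribute [local instance 10] Classical.propDecidable

/-- Acyclicity of a finite directed multigraph: there is no (nonempty) closed directed
walk of edges, i.e. no directed cycle. -/
def EdgeAcyclic {V E : Type} (tail head : E → V) : Prop :=
  ∀ (n : ℕ) (c : Fin (n + 1) → E), ¬ (∀ i : Fin (n + 1), head (c i) = tail (c (i + 1)))

/-- The edge set `𝓔 = Ẽ ∪ E ∪ Ê` of a network computation problem with `K` source
edges (`Fin K`), ordinary edges `E` and demand edges (one per sink in `T`) is modelled
as the sum type `Fin K ⊕ E ⊕ T`.

`inF v` is the set `In(v)`: source edges terminating at `v` together with ordinary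
edges with head `v`. -/
def inF (V E T : Type) (K : ℕ) [Fintype V] [DecidableEq V] [Fintype E] [DecidableEq E]
    [Fintype T] [DecidableEq T] (head : E → V) (srcNode : Fin K → V) (v : V) :
    Finset (Fin K ⊕ E ⊕ T) :=
  ((Finset.univ.filter fun k : Fin K => srcNode k = v).image fun k => Sum.inl k) ∪
    ((Finset.univ.filter fun e : E => head e = v).image fun e => Sum.inr (Sum.inl e))

/-- `outF v` is the set `Out(v)`: ordinary edges with tail `v` together with the demand
edges of the sinks located at `v`. -/
def outF (V E T : Type) (K : ℕ) [Fintype V] [DecidableEq V] [Fintype E] [DecidableEq E]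
    [Fintype T] [DecidableEq T] (tail : E → V) (sinkNode : T → V) (v : V) :
    Finset (Fin K ⊕ E ⊕ T) :=
  ((Finset.univ.filter fun e : E => tail e = v).image fun e => Sum.inr (Sum.inl e)) ∪
    ((Finset.univ.filter fun t : T => sinkNode t = v).image fun t => Sum.inr (Sum.inr t))

/-- A matroid on a ground set `S`, given by its rank function satisfying the rank
axioms (R1)–(R3). -/
structure FinMatroid (S : Type) where
  rk : Finset S → ℕ
  rk_le_card : ∀ A : Finset S, rk A ≤ A.card
  rk_mono : ∀ ⦃A B : Finset S⦄, A ⊆ B → rk A ≤ rk B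
  rk_submodular : ∀ A B : Finset S, rk (A ∪ B) + rk (A ∩ B) ≤ rk A + rk B

/-- The rank of the submatrix of `Mat` consisting of the columns indexed by `A`. -/
noncomputable def colRank (F : Type) [Field F] {m n : ℕ} (Mat : Matrix (Fin m) (Fin n) F)
    (A : Finset (Fin n)) : ℕ :=
  (Matrix.of fun (i : Fin m) (a : {x // x ∈ A}) => Mat i a.1).rank

/-- `Mat` (an `m × n` matrix) together with the bijection `φ` from the ground set to the
column indices is a representation of the matroid `M` over `F`: for every subset `A` of
the ground set, the rank of the corresponding columns equals `M.rk A`. -/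
def IsRepresentation (F : Type) [Field F] {S : Type} (M : FinMatroid S) {m n : ℕ}
    (Mat : Matrix (Fin m) (Fin n) F) (φ : S ≃ Fin n) : Prop :=
  ∀ A : Finset S, colRank F Mat (A.image φ) = M.rk A

/-- A network-matroid map for the network computation problem: a map from
`𝒳 ∪ E ∪ G_T` (identified with the edges `Ẽ ∪ E ∪ Ê`) to the ground set of the matroid
satisfying (M1) (injective on the source messages), (M2) (the image of the source
messages is independent) and (M3) (`r(f(In(v))) = r(f(In(v) ∪ Out(v)))` for all `v`). -/
def IsNetworkMatroidMap (F V E T : Type) [Field F] [Fintype V] [DecidableEq V]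
    [Fintype E] [DecidableEq E] [Fintype T] [DecidableEq T] (K : ℕ)
    (tail head : E → V) (srcNode : Fin K → V) (sinkNode : T → V)
    {S : Type} (M : FinMatroid S) (f : Fin K ⊕ E ⊕ T → S) : Prop :=
  Function.Injective (fun k : Fin K => f (Sum.inl k)) ∧
  M.rk (Finset.univ.image fun k : Fin K => f (Sum.inl k)) =
      (Finset.univ.image fun k : Fin K => f (Sum.inl k)).card ∧
  ∀ v : V,
    M.rk ((inF V E T K head srcNode v).image f) =
      M.rk ((inF V E T K head srcNode v ∪ outF V E T K tail sinkNode v).image f)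

/-- The family `Fv` of global encoding vectors (one per edge of `𝓔`) is a scalar linear
solution for the network computation problem with linear demands `g`: source edges get
the standard basis vectors, demand edges get the demand vectors, the vector of every
outgoing edge of a node `v` is an `F`-linear combination of the vectors of `In(v)`, and
every sink has a linear decoder recovering its demand. -/
def IsLinearCodeSolution (F V E T : Type) [Field F] [Fintype V] [DecidableEq V]
    [Fintype E] [DecidableEq E] [Fintype T] [DecidableEq T] (K : ℕ)
    (tail head : E → V) (srcNode : Fin K → V) (sinkNode : T → V)
    (g : T → Fin K → F) (Fv : Fin K ⊕ E ⊕ T → Fin K → F) : Prop :=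
  (∀ k : Fin K, Fv (Sum.inl k) = fun j => if j = k then (1 : F) else 0) ∧
  (∀ t : T, Fv (Sum.inr (Sum.inr t)) = g t) ∧
  (∀ v : V, ∀ x ∈ outF V E T K tail sinkNode v,
    Fv x ∈ Submodule.span F (Fv '' (inF V E T K head srcNode v : Set (Fin K ⊕ E ⊕ T)))) ∧
  (∀ t : T, ∃ d : {x // x ∈ inF V E T K head srcNode (sinkNode t)} → F,
    ∀ X : Fin K → F, ∑ k, X k * g t k = ∑ e', (∑ k, X k * Fv e'.1 k) * d e')

/-- The network computation problem admits a scalar linear solution over `F`. -/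
def ScalarLinearSolvable (F V E T : Type) [Field F] [Fintype V] [DecidableEq V]
    [Fintype E] [DecidableEq E] [Fintype T] [DecidableEq T] (K : ℕ)
    (tail head : E → V) (srcNode : Fin K → V) (sinkNode : T → V)
    (g : T → Fin K → F) : Prop :=
  ∃ Fv : Fin K ⊕ E ⊕ T → Fin K → F,
    IsLinearCodeSolution F V E T K tail head srcNode sinkNode g Fv


section Aux

open Module Submodule

lemma colRank_eq_finrank_span (F : Type) [Field F] {m n : ℕ} (Mat : Matrix (Fin m) (Fin n) F)
    (B : Finset (Fin n)) :
    colRank F Mat B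
      = Module.finrank F (Submodule.span F
          ((fun j => fun i => Mat i j) '' (B : Set (Fin n)))) := by
  rw [colRank, Matrix.rank_eq_finrank_span_cols]
  have h : Set.range (Matrix.of fun (i : Fin m) (a : {x // x ∈ B}) => Mat i a.1).col
      = (fun j => fun i => Mat i j) '' (B : Set (Fin n)) := by
    ext y
    constructor
    · rintro ⟨a, rfl⟩; exact ⟨a.1, a.2, rfl⟩
    · rintro ⟨j, hj, rfl⟩; exact ⟨⟨j, hj⟩, rfl⟩
  rw [h]

lemma colRank_image_equiv (F : Type) [Field F] {S : Type} [DecidableEq S] {m n : ℕ}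
    (Mat : Matrix (Fin m) (Fin n) F) (φ : S ≃ Fin n) (A : Finset S) :
    colRank F Mat (A.image φ)
      = Module.finrank F (Submodule.span F
          ((fun s => fun i => Mat i (φ s)) '' (A : Set S))) := by
  rw [colRank_eq_finrank_span]
  have h : (fun j => fun i => Mat i j) '' ((A.image φ : Finset (Fin n)) : Set (Fin n))
      = (fun s => fun i => Mat i (φ s)) '' (A : Set S) := by
    rw [Finset.coe_image, ← Set.image_comp]
    rfl
  rw [h]

/-- The vector matroid of a family of vectors `w : S → Fin m → F`. -/
noncomputable def vecMatroid (F : Type) [Field F] {S : Type} {m : ℕ} (w : S → Fin m → F) :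
    FinMatroid S where
  rk A := Module.finrank F (Submodule.span F (w '' (A : Set S)))
  rk_le_card A := by
    classical
    calc Module.finrank F (Submodule.span F (w '' (A : Set S)))
        = Module.finrank F (Submodule.span F
            ((A.image w : Finset (Fin m → F)) : Set (Fin m → F))) := by
          rw [Finset.coe_image]
      _ ≤ (A.image w).card := finrank_span_finset_le_card _
      _ ≤ A.card := Finset.card_image_le
  rk_mono A B h := Submodule.finrank_mono (Submodule.span_mono (Set.image_mono h))
  rk_submodular A B := by
    classical
    have h1 : Submodule.span F (w '' ((A ∪ B : Finset S) : Set S))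
        = Submodule.span F (w '' (A : Set S)) ⊔ Submodule.span F (w '' (B : Set S)) := by
      rw [Finset.coe_union, Set.image_union, Submodule.span_union]
    have h2 : Submodule.span F (w '' ((A ∩ B : Finset S) : Set S))
        ≤ Submodule.span F (w '' (A : Set S)) ⊓ Submodule.span F (w '' (B : Set S)) := by
      rw [Finset.coe_inter]
      exact le_inf (span_mono (Set.image_mono Set.inter_subset_left))
        (span_mono (Set.image_mono Set.inter_subset_right))
    have h3 := Submodule.finrank_mono h2
    have h4 := Submodule.finrank_sup_add_finrank_inf_eq
      (Submodule.span F (w '' (A : Set S))) (Submodule.span F (w '' (B : Set S)))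
    rw [h1]
    omega

lemma vecMatroid_rk (F : Type) [Field F] {S : Type} {m : ℕ} (w : S → Fin m → F)
    (A : Finset S) :
    (vecMatroid F w).rk A = Module.finrank F (Submodule.span F (w '' (A : Set S))) := rfl

end Aux

/-- A network computation problem over `F = F_q` with `K` source
messages in which every sink `t` demands the linear function `g_t(X) = X·g_t` admits a
scalar linear solution over `F` if and only if the network is matroidal with respect to
a matroid `M` representable over `F` having a representation `Mat ∈ F^{m×n}`, `m ≥ K`,
`n ≥ m`, that satisfies (C1) (the columns assigned to the `K` source messages form
`[I_K ; 0]`) and (C2) (the columns assigned to the demands form `[g_{t_1} ⋯ g_{t_|T|} ; 0]`). -/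
theorem statement0 (F V E T : Type) [Field F] [Fintype F] [Fintype V] [DecidableEq V]
    [Fintype E] [DecidableEq E] [Fintype T] [DecidableEq T] (K : ℕ)
    (tail head : E → V) (srcNode : Fin K → V) (sinkNode : T → V)
    (hacyc : EdgeAcyclic tail head) (g : T → Fin K → F) :
    ScalarLinearSolvable F V E T K tail head srcNode sinkNode g ↔
      ∃ (S : Type) (M : FinMatroid S) (m n : ℕ) (Mat : Matrix (Fin m) (Fin n) F)
        (φ : S ≃ Fin n) (f : Fin K ⊕ E ⊕ T → S),
        K ≤ m ∧ m ≤ n ∧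
        IsRepresentation F M Mat φ ∧
        IsNetworkMatroidMap F V E T K tail head srcNode sinkNode M f ∧
        (∀ (k : Fin K) (i : Fin m),
          Mat i (φ (f (Sum.inl k))) = if (i : ℕ) = (k : ℕ) then 1 else 0) ∧
        (∀ (t : T) (i : Fin m),
          Mat i (φ (f (Sum.inr (Sum.inr t)))) =
            if h : (i : ℕ) < K then g t ⟨i, h⟩ else 0) := by
  classical
  constructor
  · rintro ⟨Fv, hsrc, hdem, hspan, -⟩
    set n := Fintype.card (Fin K ⊕ E ⊕ T) with hn
    set φ : (Fin K ⊕ E ⊕ T) ≃ Fin n := Fintype.equivFin _ with hφ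
    set Mat : Matrix (Fin K) (Fin n) F :=
      Matrix.of (fun i j => Fv (φ.symm j) i) with hMat
    have hIeq : ∀ {α : Type} (f' : α → Fin K ⊕ E ⊕ T) (s : Finset α),
        (@Finset.image α (Fin K ⊕ E ⊕ T)
          (fun a b => Classical.propDecidable (a = b)) f' s) = s.image f' := by
      intro α f' s
      exact congrFun (congrFun (congrArg (fun i => @Finset.image α _ i)
        (Subsingleton.elim _ _)) f') s
    have hUeq : ∀ (A B : Finset (Fin K ⊕ E ⊕ T)),
        (@Union.union _ (@Finset.instUnion _
          (fun a b => Classical.propDecidable (a = b))) A B) = A ∪ B := by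
      intro A B
      exact congrFun (congrFun (congrArg
        (fun i => @Union.union (Finset (Fin K ⊕ E ⊕ T)) (@Finset.instUnion _ i))
        (Subsingleton.elim _ _)) A) B
    refine ⟨Fin K ⊕ E ⊕ T, vecMatroid F Fv, K, n, Mat, φ, id, le_refl K, ?_, ?_, ?_, ?_, ?_⟩
    · simp [hn, Fintype.card_sum]
    · intro A
      rw [colRank_image_equiv]
      have h : (fun s => fun i => Mat i (φ s)) '' (A : Set (Fin K ⊕ E ⊕ T))
          = Fv '' (A : Set (Fin K ⊕ E ⊕ T)) := by
        apply Set.image_congr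
        intro s _
        funext i
        simp [hMat]
      rw [h]
      rfl
    · refine ⟨fun a b hab => Sum.inl_injective hab, ?_, ?_⟩
      · rw [vecMatroid_rk, hIeq, Finset.coe_image, Finset.coe_univ, Set.image_univ,
          ← Set.range_comp,
          Finset.card_image_of_injective _
            (fun a b hab => Sum.inl_injective hab :
              Function.Injective (fun k : Fin K => id (Sum.inl k))),
          Finset.card_univ, Fintype.card_fin]
        have h2 : Set.range (Fv ∘ fun k : Fin K => id (Sum.inl k))
            = Set.range ⇑(Pi.basisFun F (Fin K)) := by
          have : (Fv ∘ fun k : Fin K => id (Sum.inl k)) = ⇑(Pi.basisFun F (Fin K)) := by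
            funext k
            rw [Function.comp_apply, id_eq, hsrc k, Pi.basisFun_apply]
            funext j
            simp [Pi.single_apply]
          rw [this]
        rw [h2, Module.Basis.span_eq, finrank_top, Module.finrank_pi, Fintype.card_fin]
      · intro v
        rw [vecMatroid_rk, vecMatroid_rk, hIeq, hIeq, Finset.image_id,
          Finset.image_id, Finset.coe_union, Set.image_union, Submodule.span_union]
        have hsub : Submodule.span F (Fv ''
            ((outF V E T K tail sinkNode v : Finset (Fin K ⊕ E ⊕ T)) :
              Set (Fin K ⊕ E ⊕ T)))
            ≤ Submodule.span F (Fv ''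
              ((inF V E T K head srcNode v : Finset (Fin K ⊕ E ⊕ T)) :
                Set (Fin K ⊕ E ⊕ T))) := by
          refine Submodule.span_le.mpr ?_
          rintro y ⟨x, hx, rfl⟩
          exact hspan v x hx
        rw [sup_eq_left.mpr hsub]
    · intro k i
      have := congrFun (hsrc k) i
      simp only [hMat, Matrix.of_apply, Equiv.symm_apply_apply, id_eq]
      rw [this]
      simp [Fin.ext_iff]
    · intro t i
      simp only [hMat, Matrix.of_apply, Equiv.symm_apply_apply, id_eq]
      rw [hdem t]
      simp [i.isLt]
  · rintro ⟨S, M, m, n, Mat, φ, f, hKm, hmn, hrep, ⟨hinj, hM2, hM3⟩, hC1, hC2⟩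
    set col : S → Fin m → F := fun s i => Mat i (φ s) with hcol
    set π : (Fin m → F) →ₗ[F] (Fin K → F) := LinearMap.funLeft F F (Fin.castLE hKm) with hπ
    set Fv : Fin K ⊕ E ⊕ T → Fin K → F := fun x => π (col (f x)) with hFv
    have key : ∀ v : V, ∀ x ∈ outF V E T K tail sinkNode v,
        Fv x ∈ Submodule.span F (Fv ''
          ((inF V E T K head srcNode v : Finset (Fin K ⊕ E ⊕ T)) :
            Set (Fin K ⊕ E ⊕ T))) := by
      intro v x hx
      have hA := hrep ((inF V E T K head srcNode v).image f)
      have hB := hrep ((inF V E T K head srcNode v ∪ outF V E T K tail sinkNode v).image f)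
      rw [colRank_image_equiv] at hA hB
      have hle : Submodule.span F (col ''
            (((inF V E T K head srcNode v).image f : Finset S) : Set S))
          ≤ Submodule.span F (col ''
            (((inF V E T K head srcNode v ∪ outF V E T K tail sinkNode v).image f :
              Finset S) : Set S)) := by
        refine Submodule.span_mono (Set.image_mono ?_)
        exact_mod_cast Finset.image_subset_image Finset.subset_union_left
      have heq : Submodule.span F (col ''
            (((inF V E T K head srcNode v).image f : Finset S) : Set S))
          = Submodule.span F (col ''
            (((inF V E T K head srcNode v ∪ outF V E T K tail sinkNode v).image f :
              Finset S) : Set S)) := by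
        refine Submodule.eq_of_le_of_finrank_eq hle ?_
        rw [hA, hB, hM3 v]
      have hmem : col (f x) ∈ Submodule.span F (col ''
          (((inF V E T K head srcNode v).image f : Finset S) : Set S)) := by
        rw [heq]
        refine Submodule.subset_span ⟨f x, ?_, rfl⟩
        exact_mod_cast Finset.mem_image_of_mem f (Finset.mem_union_right _ hx)
      have hmap : π (col (f x)) ∈ Submodule.map π (Submodule.span F (col ''
          (((inF V E T K head srcNode v).image f : Finset S) : Set S))) :=
        Submodule.mem_map_of_mem hmem
      rw [Submodule.map_span] at hmap
      have himg : π '' (col ''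
            (((inF V E T K head srcNode v).image f : Finset S) : Set S))
          = Fv '' ((inF V E T K head srcNode v : Finset (Fin K ⊕ E ⊕ T)) :
              Set (Fin K ⊕ E ⊕ T)) := by
        rw [Finset.coe_image, ← Set.image_comp, ← Set.image_comp]
        rfl
      rw [himg] at hmap
      exact hmap
    have hsrcEq : ∀ k : Fin K, Fv (Sum.inl k) = fun j => if j = k then (1 : F) else 0 := by
      intro k
      funext j
      have := hC1 k (Fin.castLE hKm j)
      simp only [hFv, hπ, hcol, LinearMap.funLeft_apply]
      rw [this]
      simp [Fin.ext_iff]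
    have hdemEq : ∀ t : T, Fv (Sum.inr (Sum.inr t)) = g t := by
      intro t
      funext j
      have := hC2 t (Fin.castLE hKm j)
      simp only [hFv, hπ, hcol, LinearMap.funLeft_apply]
      rw [this]
      have hj : ((Fin.castLE hKm j : Fin m) : ℕ) < K := j.isLt
      rw [dif_pos hj]
      congr 1
    refine ⟨Fv, hsrcEq, hdemEq, key, ?_⟩
    intro t
    have hx : Sum.inr (Sum.inr t) ∈ outF V E T K tail sinkNode (sinkNode t) := by
      simp [outF]
    have hgt : g t ∈ Submodule.span F (Fv ''
        ((inF V E T K head srcNode (sinkNode t) : Finset (Fin K ⊕ E ⊕ T)) :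
          Set (Fin K ⊕ E ⊕ T))) := by
      have := key (sinkNode t) _ hx
      rwa [hdemEq t] at this
    have hrange : Fv '' ((inF V E T K head srcNode (sinkNode t) :
          Finset (Fin K ⊕ E ⊕ T)) : Set (Fin K ⊕ E ⊕ T))
        = Set.range (fun e' : {x // x ∈ inF V E T K head srcNode (sinkNode t)} => Fv e'.1) := by
      ext y
      constructor
      · rintro ⟨x, hxx, rfl⟩; exact ⟨⟨x, hxx⟩, rfl⟩
      · rintro ⟨a, rfl⟩; exact ⟨a.1, a.2, rfl⟩
    rw [hrange] at hgt
    obtain ⟨c, hc⟩ := (Submodule.mem_span_range_iff_exists_fun F).mp hgt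
    refine ⟨c, ?_⟩
    intro X
    have hgk : ∀ k, g t k = ∑ e', c e' * Fv e'.1 k := by
      intro k
      rw [← hc]
      simp [Finset.sum_apply]
    calc ∑ k, X k * g t k
        = ∑ k, X k * ∑ e', c e' * Fv e'.1 k := by
          exact Finset.sum_congr rfl fun k _ => by rw [hgk k]
      _ = ∑ k, ∑ e', X k * (c e' * Fv e'.1 k) := by
          exact Finset.sum_congr rfl fun k _ => Finset.mul_sum _ _ _
      _ = ∑ e', ∑ k, X k * (c e' * Fv e'.1 k) := Finset.sum_comm
      _ = ∑ e', (∑ k, X k * Fv e'.1 k) * c e' := by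
          refine Finset.sum_congr rfl fun e' _ => ?_
          rw [Finset.sum_mul]
          exact Finset.sum_congr rfl fun k _ => by ring
end

section
/- Let F be a network computation problem over F_q with K source messages, edges ordered ancestrally as ẽ_1, …, ẽ_K, e_1, …, e_{|E|}, ê_1, …, ê_{|T|}, and each sink t ∈ T demanding a linear function g_t(X) = X·g_t. Suppose F admits a scalar linear solution with global encoding vectors {F_e ∈ F_q^K : e ∈ 𝓔} (so F_{ẽ_k} = ε_k, the k-th standard basis vector, and F_{ê_{t_j}} = g_{t_j}). Form the K × |𝓔| matrix M = [I_{K×K} | F_{e_1} ⋯ F_{e_{|E|}} | g_{t_1} ⋯ g_{t_{|T|}}] by juxtaposing all global encoding vectors, and define f : 𝒳 ∪ E ∪ G_T → [|𝓔|] by f(X_k) = k, f(e_i) = K + i, f(g_{t_j}) = K + |E| + j. Then f satisfies (M1), (M2), (M3), so N is matroidal with respect to the vector matroid M(M); moreover M satisfies (C1) and (C2) with m = K and n = |𝓔|. -/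
/-!
Statement 0: A network computation problem with linear sink demands admits a scalar
linear solution over `F` if and only if the network is matroidal with respect to a
matroid representable over `F` with a representation satisfying (C1) and (C2).
-/

attribute [local instance 10] Classical.propDecidable

section InstanceAgnostic
variable {α β : Type}

/-- Instance-agnostic version of `Finset.coe_union`. -/
lemma coe_union_any (inst : DecidableEq α) (A B : Finset α) :
    ((@Union.union _ (@Finset.instUnion _ inst) A B : Finset α) : Set α)
      = (A : Set α) ∪ (B : Set α) := by
  letI := inst; exact Finset.coe_union A B

/-- Instance-agnostic version of `Finset.coe_inter`. -/
lemma coe_inter_any (inst : DecidableEq α) (A B : Finset α) :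
    ((@Inter.inter _ (@Finset.instInter _ inst) A B : Finset α) : Set α)
      = (A : Set α) ∩ (B : Set α) := by
  letI := inst; exact Finset.coe_inter A B

/-- Instance-agnostic version of `Finset.image_id`. -/
lemma image_id_any (inst : DecidableEq α) (s : Finset α) :
    @Finset.image _ _ inst id s = s := by
  letI := inst; exact Finset.image_id

/-- Instance-agnostic version of `Finset.card_image_of_injective`. -/
lemma card_image_any (inst : DecidableEq β) (f : α → β) (hf : Function.Injective f)
    (s : Finset α) : (@Finset.image _ _ inst f s).card = s.card := by
  letI := inst; exact Finset.card_image_of_injective s hf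

/-- Instance-agnostic version of `Finset.coe_image`. -/
lemma coe_image_any (inst : DecidableEq β) (f : α → β) (s : Finset α) :
    ((@Finset.image _ _ inst f s : Finset β) : Set β) = f '' (s : Set α) := by
  letI := inst; exact Finset.coe_image

end InstanceAgnostic

/-- Auxiliary: the rank of the submatrix of columns indexed by a finset `A` equals the
finrank of the span of the corresponding column vectors. -/
lemma colRank_eq_finrank_span_s1 (F : Type) [Field F] {K : ℕ} {α : Type}
    (Fv : α → Fin K → F) (A : Finset α) :
    (Matrix.of fun (i : Fin K) (a : {x // x ∈ A}) => Fv a.1 i).rank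
      = Module.finrank F (Submodule.span F (Fv '' (A : Set α))) := by
  rw [Matrix.rank_eq_finrank_span_cols]
  have hset : Set.range (Matrix.of fun (i : Fin K) (a : {x // x ∈ A}) => Fv a.1 i).transpose
      = Fv '' (A : Set α) := by
    ext v
    simp only [Set.mem_range, Set.mem_image, Finset.mem_coe]
    constructor
    · rintro ⟨a, rfl⟩; exact ⟨a.1, a.2, rfl⟩
    · rintro ⟨x, hx, rfl⟩; exact ⟨⟨x, hx⟩, rfl⟩
  exact congrArg (fun s => Module.finrank F (Submodule.span F s)) hset

/-- Given a scalar linear solution of a network computation problem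
with linear demands (global encoding vectors `Fv`, with `Fv(ẽ_k) = ε_k` and
`Fv(ê_t) = g_t`), juxtaposing all the global encoding vectors yields the `K × |𝓔|`
matrix `Mat = [I_K | F_{e_1} ⋯ F_{e_|E|} | g_{t_1} ⋯ g_{t_|T|}]` (here columns are
indexed by the edges `Fin K ⊕ E ⊕ T` in the ancestral order `ẽ's, e's, ê's`, and the
map `f(X_k) = k`, `f(e_i) = K + i`, `f(g_{t_j}) = K + |E| + j` is the identity on this
index type).  Then `f` satisfies (M1), (M2) and (M3) with respect to the vector matroid
`M(Mat)` of `Mat`, so the network is matroidal with respect to `M(Mat)`; moreover `Mat`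
satisfies (C1) and (C2) with `m = K` and `n = |𝓔|`. -/

theorem statement1 (F V E T : Type) [Field F] [Fintype F] [Fintype V] [DecidableEq V]
    [Fintype E] [DecidableEq E] [Fintype T] [DecidableEq T] (K : ℕ)
    (tail head : E → V) (srcNode : Fin K → V) (sinkNode : T → V)
    (hacyc : EdgeAcyclic tail head) (g : T → Fin K → F)
    (Fv : Fin K ⊕ E ⊕ T → Fin K → F)
    (hsol : IsLinearCodeSolution F V E T K tail head srcNode sinkNode g Fv) :
    ∃ M : FinMatroid (Fin K ⊕ E ⊕ T),
      -- `M` is the vector matroid of the matrix `Mat : i ↦ x ↦ Fv x i` of global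
      -- encoding vectors: the rank of a set of edges is the rank of the corresponding
      -- columns of `Mat`
      (∀ A : Finset (Fin K ⊕ E ⊕ T),
        M.rk A = (Matrix.of fun (i : Fin K) (a : {x // x ∈ A}) => Fv a.1 i).rank) ∧
      -- the identity map `f` satisfies (M1)-(M3): the network is matroidal w.r.t. `M`
      IsNetworkMatroidMap F V E T K tail head srcNode sinkNode M
        (id : Fin K ⊕ E ⊕ T → Fin K ⊕ E ⊕ T) ∧
      -- (C1) with `m = K`: the source columns of `Mat` form the identity matrix
      (∀ (k : Fin K) (i : Fin K), Fv (Sum.inl k) i = if (i : ℕ) = (k : ℕ) then 1 else 0) ∧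
      -- (C2) with `m = K`: the demand columns of `Mat` form `[g_{t_1} ⋯ g_{t_|T|}]`
      (∀ (t : T) (i : Fin K), Fv (Sum.inr (Sum.inr t)) i = g t i) := by
  classical
  obtain ⟨hsrc, hdem, hspan, _hdec⟩ := hsol
  have hcomp : (Fv ∘ (Sum.inl : Fin K → Fin K ⊕ E ⊕ T)) = ⇑(Pi.basisFun F (Fin K)) := by
    funext k
    rw [Function.comp_apply, hsrc k, Pi.basisFun_apply]
    funext j
    simp [Pi.single_apply]
  refine ⟨⟨fun A => Module.finrank F (Submodule.span F (Fv '' (A : Set (Fin K ⊕ E ⊕ T)))),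
    ?_, ?_, ?_⟩, ?_, ?_, ?_, ?_⟩
  · -- rk ≤ card
    intro A
    have h1 : Fv '' (A : Set (Fin K ⊕ E ⊕ T))
        = ((A.image Fv : Finset (Fin K → F)) : Set (Fin K → F)) := by
      simp [Finset.coe_image]
    rw [h1]
    exact le_trans (finrank_span_finset_le_card (A.image Fv)) Finset.card_image_le
  · -- monotone
    intro A B hAB
    exact Submodule.finrank_mono (Submodule.span_mono (Set.image_mono  (by exact_mod_cast hAB)))
  · -- submodular
    intro A B
    rw [coe_union_any, Set.image_union, Submodule.span_union]
    refine le_trans (add_le_add_right (Submodule.finrank_mono (le_inf ?_ ?_)) _)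
      (le_of_eq (Submodule.finrank_sup_add_finrank_inf_eq _ _))
    · refine Submodule.span_mono (Set.image_mono  ?_)
      intro x hx
      rw [coe_inter_any, Set.mem_inter_iff] at hx
      exact hx.1
    · refine Submodule.span_mono (Set.image_mono  ?_)
      intro x hx
      rw [coe_inter_any, Set.mem_inter_iff] at hx
      exact hx.2
  · -- rank function is the matrix column rank
    intro A
    exact (colRank_eq_finrank_span_s1 F Fv A).symm
  · -- (M1)-(M3)
    refine ⟨?_, ?_, ?_⟩
    · -- (M1)
      intro a b hab
      exact Sum.inl_injective hab
    · -- (M2)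
      dsimp only
      rw [show (fun k : Fin K => (id (Sum.inl k) : Fin K ⊕ E ⊕ T))
          = (Sum.inl : Fin K → Fin K ⊕ E ⊕ T) from rfl]
      rw [card_image_any _ _ Sum.inl_injective, Finset.card_univ, Fintype.card_fin]
      rw [coe_image_any, Finset.coe_univ, Set.image_univ, ← Set.range_comp, hcomp,
        Module.Basis.span_eq, finrank_top]
      simp
    · -- (M3)
      intro v
      dsimp only
      rw [image_id_any, image_id_any, coe_union_any, Set.image_union,
        Submodule.span_union]
      have hle : Submodule.span F (Fv '' ((outF V E T K tail sinkNode v)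
            : Set (Fin K ⊕ E ⊕ T)))
          ≤ Submodule.span F (Fv '' ((inF V E T K head srcNode v)
            : Set (Fin K ⊕ E ⊕ T))) := by
        rw [Submodule.span_le]
        rintro _ ⟨x, hx, rfl⟩
        exact SetLike.mem_coe.mpr (hspan v x (by exact_mod_cast hx))
      rw [sup_eq_left.mpr hle]
  · -- (C1)
    intro k i
    rw [hsrc k]
    simp [Fin.ext_iff]
  · -- (C2)
    intro t i
    rw [hdem t]
end
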